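/- For nonnegative integers i ≥ 0, Σ_{k=0}^{i} S₂(i,k) b_k(x) k! = ((x+1)^{i+1} - x^{i+1})/(i+1), where S₂ are Stirling numbers of the second kind and b_k(x) are the Bernoulli polynomials of the second kind. -/

import Mathlib

open Finset PowerSeries

/-- Stirling numbers of the second kind. -/
def S2 : ℕ → ℕ → ℕ
  | 0, 0 => 1
  | 0, _ + 1 => 0
  | _ + 1, 0 => 0
  | n + 1, k + 1 => (k + 1) * S2 n (k + 1) + S2 n k

/-- The formal power series `log(1+t)/t = ∑_{n≥0} (-1)^n t^n/(n+1)`. -/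
noncomputable def logT : PowerSeries ℂ :=
  PowerSeries.mk fun n => (-1) ^ n / ((n : ℂ) + 1)

/-- The formal power series `(1+t)^x = ∑_{n≥0} x(x-1)⋯(x-n+1)/n! · t^n`. -/
noncomputable def binomSeries (x : ℂ) : PowerSeries ℂ :=
  PowerSeries.mk fun n => (∏ j ∈ Finset.range n, (x - j)) / (Nat.factorial n : ℂ)

/-- The Bernoulli polynomials of the second kind `b_m(x)`, defined by
`(t/log(1+t))(1+t)^x = ∑_{m≥0} b_m(x) t^m`. -/
noncomputable def b2 (m : ℕ) (x : ℂ) : ℂ :=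
  PowerSeries.coeff m (logT⁻¹ * binomSeries x)

/-!
The generating function `t / log(1+t)` is `∫₀¹ (1+t)^u du`: differentiating `(1+t)^u` in `u`
gives `log(1+t) (1+t)^u`, which coefficientwise is Vandermonde's identity differentiated at `0`.
Multiplying by `(1+t)^x` gives `b_k(x) = ∫₀¹ binom(x+u, k) du`. Since
`∑ₖ S₂(i,k) k! binom(y, k) = y^i`, the sum in question is `∫₀¹ (x+u)^i du`.
-/

open Nat MeasureTheory

theorem Ring.choose_eq_prod_range_div {R : Type*} [Field R] [CharZero R] (a : R) (n : ℕ) :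
    Ring.choose a n = (∏ j ∈ range n, (a - j)) / n ! := by
  rw [Ring.choose_eq_smul, ← descPochhammer_eval_eq_prod_range,
    ← descPochhammer_map (algebraMap ℤ R), Polynomial.eval_map_algebraMap,
    Polynomial.aeval_eq_smeval, smul_eq_mul, inv_mul_eq_div]

theorem X_mul_descPochhammer (R : Type*) [CommRing R] (k : ℕ) :
    Polynomial.X * descPochhammer R k = descPochhammer R (k + 1) + k • descPochhammer R k := by
  rw [descPochhammer_succ_right, nsmul_eq_mul]
  ring

theorem sum_stirlingSecond_smul_descPochhammer (R : Type*) [CommRing R] (n : ℕ) :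
    ∑ k ∈ range (n + 1), stirlingSecond n k • descPochhammer R k = Polynomial.X ^ n := by
  induction n with
  | zero => simp
  | succ n ih =>
    have shift :
        ∑ k ∈ range (n + 1), ((k + 1) * stirlingSecond n (k + 1)) • descPochhammer R (k + 1)
        = ∑ k ∈ range (n + 1), (k * stirlingSecond n k) • descPochhammer R k := by
      rw [sum_range_succ, sum_range_succ' _ n, stirlingSecond_eq_zero_of_lt n.lt_succ_self]
      simp
    calc ∑ k ∈ range (n + 2), stirlingSecond (n + 1) k • descPochhammer R k
        = ∑ k ∈ range (n + 1), ((k + 1) * stirlingSecond n (k + 1)) • descPochhammer R (k + 1)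
          + ∑ k ∈ range (n + 1), stirlingSecond n k • descPochhammer R (k + 1) := by
          rw [sum_range_succ' _ (n + 1), stirlingSecond_succ_zero, zero_smul, add_zero,
            ← sum_add_distrib]
          exact sum_congr rfl fun k _ => by rw [stirlingSecond_succ_succ, add_smul]
      _ = ∑ k ∈ range (n + 1), stirlingSecond n k • (Polynomial.X * descPochhammer R k) := by
          rw [shift, ← sum_add_distrib]
          exact sum_congr rfl fun k _ => by rw [X_mul_descPochhammer]; module
      _ = Polynomial.X ^ (n + 1) := by
          simp_rw [_root_.pow_succ', ← ih, mul_sum, mul_smul_comm]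

theorem sum_stirlingSecond_mul_factorial_mul_choose {R : Type*} [Field R] [CharZero R]
    (n : ℕ) (y : R) :
    ∑ k ∈ range (n + 1), (stirlingSecond n k : R) * k ! * Ring.choose y k = y ^ n := by
  have h := congrArg (Polynomial.eval y) (sum_stirlingSecond_smul_descPochhammer R n)
  rw [Polynomial.eval_finsetSum, Polynomial.eval_pow, Polynomial.eval_X] at h
  rw [← h]
  refine sum_congr rfl fun k _ => ?_
  rw [Polynomial.eval_smul, nsmul_eq_mul, descPochhammer_eval_eq_prod_range,
    Ring.choose_eq_prod_range_div, mul_assoc,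
    mul_div_cancel₀ _ (Nat.cast_ne_zero.2 k.factorial_ne_zero)]

theorem S2_eq_stirlingSecond : S2 = stirlingSecond := by
  ext n k
  induction n generalizing k with
  | zero => cases k <;> rfl
  | succ n ih => cases k <;> simp [S2, stirlingSecond_succ_succ, ih]

theorem hasDerivAt_choose_zero (n : ℕ) :
    HasDerivAt (fun h : ℂ => Ring.choose h n) (coeff n (X * logT)) 0 := by
  cases n with
  | zero => simpa [Ring.choose_zero_right] using hasDerivAt_const (0 : ℂ) (1 : ℂ)
  | succ k =>
    set g : ℂ → ℂ := fun h => (∏ j ∈ range k, (h - (j + 1))) / (k + 1)!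
    have hchoose : (fun h : ℂ => Ring.choose h (k + 1)) = fun h => h * g h := by
      funext h
      simp only [Ring.choose_eq_prod_range_div, prod_range_succ', g]
      push_cast
      ring
    have hg0 : g 0 = (-1) ^ k / (k + 1) := by
      simp only [g, zero_sub, prod_neg, card_range, ← Nat.cast_add_one, ← Nat.cast_prod,
        prod_range_add_one_eq_factorial, Nat.factorial_succ, Nat.cast_mul]
      field_simp [Nat.factorial_ne_zero]
    have hg : Differentiable ℂ g := by fun_prop
    rw [hchoose, coeff_succ_X_mul, logT, coeff_mk]
    simpa [hg0] using (hasDerivAt_id' (0 : ℂ)).fun_mul (hg 0).hasDerivAt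

-- Differentiate Vandermonde's `choose (h + u) n = ∑ choose h i * choose u j` at `h = 0`.
theorem hasDerivAt_choose (n : ℕ) (u : ℂ) :
    HasDerivAt (fun z : ℂ => Ring.choose z n)
      (coeff n (X * logT * PowerSeries.binomialSeries ℂ u)) u := by
  have hshift : HasDerivAt (fun h : ℂ => Ring.choose (h + u) n)
      (coeff n (X * logT * PowerSeries.binomialSeries ℂ u)) 0 := by
    rw [coeff_mul n (X * logT)]
    simp only [Ring.add_choose_eq n (Commute.all _ u), binomialSeries_coeff, smul_eq_mul, mul_one]
    exact HasDerivAt.fun_sum fun p _ => (hasDerivAt_choose_zero p.1).mul_const _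
  have h := HasDerivAt.comp_sub_const u u (by rwa [sub_self])
  simp only [sub_add_cancel] at h
  exact h

theorem continuous_choose (n : ℕ) : Continuous fun z : ℂ => Ring.choose z n :=
  continuous_iff_continuousAt.2 fun u => (hasDerivAt_choose n u).continuousAt

theorem continuous_coeff_mul_binomialSeries (A : ℂ⟦X⟧) (n : ℕ) :
    Continuous fun z : ℂ => coeff n (A * PowerSeries.binomialSeries ℂ z) := by
  simp only [coeff_mul, binomialSeries_coeff, smul_eq_mul, mul_one]
  exact continuous_finsetSum _ fun p _ => continuous_const.mul (continuous_choose p.2)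

theorem intervalIntegrable_choose (k : ℕ) (x : ℂ) {a b : ℝ} :
    IntervalIntegrable (fun u : ℝ => Ring.choose (x + u) k) volume a b :=
  ((continuous_choose k).comp
    (continuous_const.add Complex.continuous_ofReal)).intervalIntegrable _ _

theorem intervalIntegrable_coeff_mul_binomialSeries (A : ℂ⟦X⟧) (k : ℕ) {a b : ℝ} :
    IntervalIntegrable (fun u : ℝ => coeff k (A * PowerSeries.binomialSeries ℂ (u : ℂ)))
      volume a b :=
  ((continuous_coeff_mul_binomialSeries A k).comp Complex.continuous_ofReal).intervalIntegrable _ _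

theorem coeff_mul_mk_intervalIntegral (A : ℂ⟦X⟧) {B : ℝ → ℂ⟦X⟧} {a b : ℝ}
    (hB : ∀ k, IntervalIntegrable (fun u => coeff k (B u)) volume a b) (n : ℕ) :
    coeff n (A * mk fun k => ∫ u in a..b, coeff k (B u)) = ∫ u in a..b, coeff n (A * B u) := by
  simp only [coeff_mul, coeff_mk, ← intervalIntegral.integral_const_mul]
  exact (intervalIntegral.integral_finsetSum fun p _ => (hB p.2).const_mul _).symm

-- The Gregory coefficients: `t / log(1+t) = ∫₀¹ (1+t)^u du`.
noncomputable def gregorySeries : ℂ⟦X⟧ :=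
  mk fun n => ∫ u in (0 : ℝ)..1, Ring.choose (u : ℂ) n

theorem gregorySeries_eq_mk_integral_coeff :
    gregorySeries =
      mk fun n => ∫ u in (0 : ℝ)..1, coeff n (PowerSeries.binomialSeries ℂ (u : ℂ)) := by
  simp [gregorySeries]

-- `X * logT = log (1 + X)`, so this is `∫₀¹ ∂ᵤ (1 + X)^u du = (1 + X) - 1`.
theorem X_mul_logT_mul_gregorySeries : X * logT * gregorySeries = X := by
  ext n
  rw [gregorySeries_eq_mk_integral_coeff,
    coeff_mul_mk_intervalIntegral _ fun k => by
      simpa using intervalIntegrable_coeff_mul_binomialSeries 1 k,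
    intervalIntegral.integral_eq_sub_of_hasDerivAt (fun u _ => (hasDerivAt_choose n u).comp_ofReal)
      (intervalIntegrable_coeff_mul_binomialSeries _ n)]
  have h1 : PowerSeries.binomialSeries ℂ (1 : ℂ) = 1 + X := by
    simpa using PowerSeries.binomialSeries_nat (A := ℂ) (R := ℂ) 1
  have hcoeff (r : ℂ) : coeff n (PowerSeries.binomialSeries ℂ r) = Ring.choose r n := by simp
  rw [← hcoeff, ← hcoeff, ← map_sub, Complex.ofReal_one, Complex.ofReal_zero, h1,
    PowerSeries.binomialSeries_zero, add_sub_cancel_left]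

theorem logT_mul_gregorySeries : logT * gregorySeries = 1 :=
  mul_left_cancel₀ X_ne_zero (by rw [← mul_assoc, X_mul_logT_mul_gregorySeries, mul_one])

theorem logT_inv : logT⁻¹ = gregorySeries := by
  rw [PowerSeries.inv_eq_iff_mul_eq_one (by simp [logT]), mul_comm, logT_mul_gregorySeries]

theorem binomSeries_eq_binomialSeries (x : ℂ) :
    binomSeries x = PowerSeries.binomialSeries ℂ x := by
  ext n
  simp [binomSeries, Ring.choose_eq_prod_range_div]

theorem b2_eq_integral_choose (k : ℕ) (x : ℂ) :
    b2 k x = ∫ u in (0 : ℝ)..1, Ring.choose (x + u) k := by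
  rw [b2, logT_inv, mul_comm, binomSeries_eq_binomialSeries, gregorySeries_eq_mk_integral_coeff,
    coeff_mul_mk_intervalIntegral _ fun j => by
      simpa using intervalIntegrable_coeff_mul_binomialSeries 1 j]
  simp [← PowerSeries.binomialSeries_add]

theorem integral_const_add_ofReal_pow (x : ℂ) (n : ℕ) :
    ∫ u in (0 : ℝ)..1, (x + u) ^ n = ((x + 1) ^ (n + 1) - x ^ (n + 1)) / (n + 1) := by
  have hderiv (u : ℝ) :
      HasDerivAt (fun v : ℝ => (x + v) ^ (n + 1) / (n + 1)) ((x + u) ^ n) u := by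
    have := (((hasDerivAt_id' (u : ℂ)).const_add x).fun_pow (n + 1)).div_const ((n : ℂ) + 1)
    convert this.comp_ofReal using 1
    push_cast
    field_simp
  rw [intervalIntegral.integral_eq_sub_of_hasDerivAt (fun u _ => hderiv u)
    (((continuous_const.add Complex.continuous_ofReal).pow n).intervalIntegrable _ _)]
  push_cast
  ring

theorem S2_b2_sum (i : ℕ) (x : ℂ) :
    ∑ k ∈ Finset.range (i + 1), (S2 i k : ℂ) * b2 k x * (Nat.factorial k : ℂ)
      = ((x + 1) ^ (i + 1) - x ^ (i + 1)) / ((i : ℂ) + 1) := by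
  calc ∑ k ∈ range (i + 1), (S2 i k : ℂ) * b2 k x * k !
      = ∫ u in (0 : ℝ)..1,
          ∑ k ∈ range (i + 1), (S2 i k : ℂ) * k ! * Ring.choose (x + u) k := by
        rw [intervalIntegral.integral_finsetSum fun k _ =>
          (intervalIntegrable_choose k x).const_mul _]
        refine sum_congr rfl fun k _ => ?_
        rw [b2_eq_integral_choose, intervalIntegral.integral_const_mul]
        ring
    _ = ∫ u in (0 : ℝ)..1, (x + u) ^ i := by
        simp only [S2_eq_stirlingSecond, sum_stirlingSecond_mul_factorial_mul_choose]
    _ = ((x + 1) ^ (i + 1) - x ^ (i + 1)) / ((i : ℂ) + 1) := integral_const_add_ofReal_pow x i
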